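/- Let q be an odd prime power, a a non-square in F_q^*, and gcd(n, q+1) = 1. The Rédei permutation R_n(·, a) of F_q has all cycles of length j or 1 if and only if for every divisor s of q+1, either n ≡ 1 (mod s) or the multiplicative order of n modulo s equals j. -/

import Mathlib

/-!
Adjoin a square root `r` of `a`. The Cayley transform `φ x = (x + r) / (x - r)` is injective
on `F` and misses `1`; since the Frobenius `z ↦ z ^ q` fixes `F` and sends `r` to `-r`
(Euler's criterion), `φ x ^ q = (φ x)⁻¹`, so `φ` lands in the group `μ_{q+1}` of
`(q + 1)`-th roots of unity. Counting, `φ` is a bijection of `F` onto `μ_{q+1} \ {1}`, and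
`μ_{q+1}` is cyclic of order `q + 1`. As `(x ± r) ^ n = G_n(x) ± H_n(x) r`, `φ` conjugates `R_n`
to `u ↦ u ^ n`, so the cycle through `x` has length the order of `n` modulo `orderOf (φ x)`,
and these orders run over all divisors `d ≠ 1` of `q + 1`.
-/

/-- The Rédei function `R_n(x, a) = G_n(x,a) / H_n(x,a)` over a field `F`, where
`(x + √a)^n = G_n(x,a) + H_n(x,a)·√a`.  Equivalently, `G_n` and `H_n` are the
coefficients of `1` and `X` in `(C x + X)^n` reduced modulo `X^2 - C a`. -/
noncomputable def redeiFun {F : Type*} [Field F] (a : F) (n : ℕ) (x : F) : F :=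
  ((Polynomial.C x + Polynomial.X) ^ n %ₘ (Polynomial.X ^ 2 - Polynomial.C a)).coeff 0 /
    ((Polynomial.C x + Polynomial.X) ^ n %ₘ (Polynomial.X ^ 2 - Polynomial.C a)).coeff 1

open Polynomial Function

theorem Function.Semiconj.minimalPeriod_eq {α β : Type*} {g : α → β} {fa : α → α} {fb : β → β}
    (h : Semiconj g fa fb) (hg : Injective g) (x : α) :
    minimalPeriod fa x = minimalPeriod fb (g x) :=
  minimalPeriod_eq_minimalPeriod_iff.mpr fun k => by
    rw [IsPeriodicPt, IsPeriodicPt, IsFixedPt, IsFixedPt,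
      ← (h.iterate_right k).eq, hg.eq_iff]

theorem IsOfFinOrder.minimalPeriod_pow {G : Type*} [Monoid G] {u : G} (hu : IsOfFinOrder u)
    (n : ℕ) : minimalPeriod (· ^ n) u = orderOf (n : ZMod (orderOf u)) := by
  rw [orderOf, minimalPeriod_eq_minimalPeriod_iff]
  intro k
  rw [isPeriodicPt_mul_iff_pow_eq_one, IsPeriodicPt, IsFixedPt, pow_iterate,
    ← Nat.cast_pow, ← Nat.cast_one, ZMod.natCast_eq_natCast_iff]
  simpa only [pow_one] using hu.pow_eq_pow_iff_modEq (n := n ^ k) (m := 1)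

theorem FiniteField.ringChar_ne_two_of_not_isSquare {F : Type*} [Field F] [Fintype F] {a : F}
    (ha : ¬IsSquare a) : ringChar F ≠ 2 :=
  fun h => ha (FiniteField.isSquare_of_char_two h a)

theorem card_rootsOfUnity_eq_card_nthRootsFinset {R : Type*} [CommRing R] [IsDomain R] (k : ℕ)
    [NeZero k] : Nat.card (rootsOfUnity k R) = (nthRootsFinset k (1 : R)).card := by
  classical
  rw [Nat.card_congr (rootsOfUnityEquivNthRoots R k), nthRootsFinset_def, ← Nat.card_eq_finsetCard]
  exact Nat.card_congr (Equiv.subtypeEquivRight fun x => Multiset.mem_toFinset.symm)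

namespace Redei

variable {F K : Type*} [Field F] [Field K] [Algebra F K] {a : F} {r : K}

noncomputable def num (a : F) (n : ℕ) (x : F) : F := ((C x + X) ^ n %ₘ (X ^ 2 - C a)).coeff 0

noncomputable def den (a : F) (n : ℕ) (x : F) : F := ((C x + X) ^ n %ₘ (X ^ 2 - C a)).coeff 1

theorem redeiFun_eq_num_div_den (n : ℕ) (x : F) : redeiFun a n x = num a n x / den a n x := rfl

theorem algebraMap_add_pow (hr : r ^ 2 = algebraMap F K a) (n : ℕ) (x : F) :
    (algebraMap F K x + r) ^ n = algebraMap F K (num a n x) + algebraMap F K (den a n x) * r := by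
  have hmonic : (X ^ 2 - C a).Monic := monic_X_pow_sub_C a two_ne_zero
  have hdeg : ((C x + X) ^ n %ₘ (X ^ 2 - C a)).natDegree ≤ 1 := by
    have := natDegree_modByMonic_lt ((C x + X) ^ n) hmonic
      (by rintro h; simpa using congrArg natDegree h)
    rw [natDegree_X_pow_sub_C] at this
    omega
  have hroot : aeval r (X ^ 2 - C a) = 0 := by simp [hr]
  calc (algebraMap F K x + r) ^ n = aeval r ((C x + X) ^ n) := by simp
    _ = aeval r ((C x + X) ^ n %ₘ (X ^ 2 - C a)) := (aeval_modByMonic_eq_self_of_root hroot).symm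
    _ = _ := by
      rw [eq_X_add_C_of_natDegree_le_one hdeg]
      simp [num, den, add_comm]

theorem algebraMap_sub_pow (hr : r ^ 2 = algebraMap F K a) (n : ℕ) (x : F) :
    (algebraMap F K x - r) ^ n = algebraMap F K (num a n x) - algebraMap F K (den a n x) * r := by
  simpa [← sub_eq_add_neg] using algebraMap_add_pow (r := -r) (by rw [neg_sq, hr]) n x

theorem algebraMap_sub_ne_zero (hr : r ^ 2 = algebraMap F K a) (ha : ¬IsSquare a) (x : F) :
    algebraMap F K x - r ≠ 0 := by
  intro h
  refine ha ⟨x, (algebraMap F K).injective ?_⟩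
  rw [← hr, ← sub_eq_zero.mp h, map_mul, sq]

theorem algebraMap_add_ne_zero (hr : r ^ 2 = algebraMap F K a) (ha : ¬IsSquare a) (x : F) :
    algebraMap F K x + r ≠ 0 := by
  simpa using algebraMap_sub_ne_zero (r := -r) (by rw [neg_sq, hr]) ha x

theorem two_mul_root_ne_zero (hr : r ^ 2 = algebraMap F K a) (ha : ¬IsSquare a)
    (h2 : (2 : F) ≠ 0) : 2 * r ≠ 0 := by
  refine mul_ne_zero ?_ (by simpa using algebraMap_sub_ne_zero hr ha 0)
  rw [← map_ofNat (algebraMap F K) 2]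
  exact (_root_.map_ne_zero _).mpr h2

noncomputable def cayley (r : K) (x : F) : K := (algebraMap F K x + r) / (algebraMap F K x - r)

theorem cayley_ne_one (hr : r ^ 2 = algebraMap F K a) (ha : ¬IsSquare a) (h2 : (2 : F) ≠ 0)
    (x : F) : cayley r x ≠ 1 := by
  rw [cayley, Ne, div_eq_one_iff_eq (algebraMap_sub_ne_zero hr ha x)]
  intro h
  exact two_mul_root_ne_zero hr ha h2 (by linear_combination h)

theorem cayley_injective (hr : r ^ 2 = algebraMap F K a) (ha : ¬IsSquare a) (h2 : (2 : F) ≠ 0) :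
    Injective (cayley (F := F) r) := by
  intro x y h
  rw [cayley, cayley, div_eq_div_iff (algebraMap_sub_ne_zero hr ha x)
    (algebraMap_sub_ne_zero hr ha y)] at h
  have : 2 * r * (algebraMap F K y - algebraMap F K x) = 0 := by linear_combination h
  exact (algebraMap F K).injective
    (sub_eq_zero.mp ((mul_eq_zero.mp this).resolve_left (two_mul_root_ne_zero hr ha h2))).symm

theorem cayley_redeiFun (hr : r ^ 2 = algebraMap F K a) {n : ℕ} {x : F}
    (hden : den a n x ≠ 0) : cayley r (redeiFun a n x) = cayley r x ^ n := by
  have hden' : algebraMap F K (den a n x) ≠ 0 := (_root_.map_ne_zero _).mpr hden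
  rw [cayley, cayley, div_pow, algebraMap_add_pow hr, algebraMap_sub_pow hr,
    redeiFun_eq_num_div_den, map_div₀, div_add' _ _ _ hden', div_sub' hden',
    div_div_div_cancel_right₀ hden', mul_comm r]

variable [Fintype F]

theorem two_ne_zero_of_not_isSquare (ha : ¬IsSquare a) : (2 : F) ≠ 0 :=
  Ring.two_ne_zero (FiniteField.ringChar_ne_two_of_not_isSquare ha)

theorem pow_card_eq_neg (hr : r ^ 2 = algebraMap F K a) (ha : ¬IsSquare a) :
    r ^ Fintype.card F = -r := by
  have hF := FiniteField.ringChar_ne_two_of_not_isSquare ha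
  have ha0 : a ≠ 0 := by rintro rfl; exact ha ⟨0, (mul_zero 0).symm⟩
  have heuler : a ^ (Fintype.card F / 2) = -1 :=
    (FiniteField.pow_dichotomy hF ha0).resolve_left (mt (FiniteField.isSquare_iff hF ha0).mpr ha)
  have hodd : Odd (Fintype.card F) := Nat.odd_iff.mpr (FiniteField.odd_card_of_char_ne_two hF)
  rw [← Nat.two_mul_div_two_add_one_of_odd hodd, pow_succ, pow_mul, hr, ← map_pow, heuler,
    map_neg, map_one, neg_one_mul]

theorem algebraMap_add_pow_card (hr : r ^ 2 = algebraMap F K a) (ha : ¬IsSquare a) (x : F) :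
    (algebraMap F K x + r) ^ Fintype.card F = algebraMap F K x - r := by
  rw [← FiniteField.frobeniusAlgHom_apply F K, map_add, AlgHom.commutes,
    FiniteField.frobeniusAlgHom_apply, pow_card_eq_neg hr ha, sub_eq_add_neg]

theorem cayley_pow_card_add_one (hr : r ^ 2 = algebraMap F K a) (ha : ¬IsSquare a) (x : F) :
    cayley r x ^ (Fintype.card F + 1) = 1 := by
  have hr' : (-r) ^ 2 = algebraMap F K a := by rw [neg_sq, hr]
  have hsub := algebraMap_add_pow_card hr' ha x
  rw [← sub_eq_add_neg, sub_neg_eq_add] at hsub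
  rw [pow_succ, cayley, div_pow, algebraMap_add_pow_card hr ha, hsub,
    div_mul_div_comm, mul_comm, div_self]
  exact mul_ne_zero (algebraMap_add_ne_zero hr ha x) (algebraMap_sub_ne_zero hr ha x)

-- Without coprimality `H_n(x)` could vanish and `redeiFun` would take the junk value `G_n / 0`.
theorem den_ne_zero (hr : r ^ 2 = algebraMap F K a) (ha : ¬IsSquare a)
    {n : ℕ} (hn : n.Coprime (Fintype.card F + 1)) (x : F) : den a n x ≠ 0 := by
  intro h
  have hpow : cayley r x ^ n = 1 := by
    rw [cayley, div_pow, algebraMap_add_pow hr, algebraMap_sub_pow hr, h, map_zero, zero_mul,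
      add_zero, sub_zero, div_self]
    simpa [algebraMap_sub_pow hr, h] using pow_ne_zero n (algebraMap_sub_ne_zero hr ha x)
  have : cayley r x ^ Nat.gcd n (Fintype.card F + 1) = 1 :=
    pow_gcd_eq_one.mpr ⟨hpow, cayley_pow_card_add_one hr ha x⟩
  exact cayley_ne_one hr ha (two_ne_zero_of_not_isSquare ha) x (by rwa [hn, pow_one] at this)

theorem minimalPeriod_redeiFun (hr : r ^ 2 = algebraMap F K a) (ha : ¬IsSquare a)
    {n : ℕ} (hn : n.Coprime (Fintype.card F + 1)) (x : F) :
    minimalPeriod (redeiFun a n) x = orderOf (n : ZMod (orderOf (cayley r x))) := by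
  have hsemiconj : Semiconj (cayley r) (redeiFun a n) (· ^ n) :=
    fun y => cayley_redeiFun hr (den_ne_zero hr ha hn y)
  have hfin : IsOfFinOrder (cayley r x) :=
    isOfFinOrder_iff_pow_eq_one.mpr ⟨_, Nat.succ_pos _, cayley_pow_card_add_one hr ha x⟩
  rw [hsemiconj.minimalPeriod_eq (cayley_injective hr ha (two_ne_zero_of_not_isSquare ha)),
    hfin.minimalPeriod_pow]

theorem orderOf_cayley_dvd (hr : r ^ 2 = algebraMap F K a) (ha : ¬IsSquare a) (x : F) :
    orderOf (cayley r x) ∣ Fintype.card F + 1 :=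
  orderOf_dvd_of_pow_eq_one (cayley_pow_card_add_one hr ha x)

theorem orderOf_cayley_ne_one (hr : r ^ 2 = algebraMap F K a) (ha : ¬IsSquare a) (x : F) :
    orderOf (cayley r x) ≠ 1 :=
  mt orderOf_eq_one_iff.mp (cayley_ne_one hr ha (two_ne_zero_of_not_isSquare ha) x)

theorem card_insert_one_image_cayley [DecidableEq K] (hr : r ^ 2 = algebraMap F K a)
    (ha : ¬IsSquare a) :
    (insert 1 (Finset.univ.image (cayley (F := F) r))).card = Fintype.card F + 1 := by
  have h2 := two_ne_zero_of_not_isSquare ha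
  rw [Finset.card_insert_of_notMem, Finset.card_image_of_injective _ (cayley_injective hr ha h2),
    Finset.card_univ]
  simpa [eq_comm] using cayley_ne_one hr ha h2

theorem nthRootsFinset_eq_insert_image_cayley [DecidableEq K] (hr : r ^ 2 = algebraMap F K a)
    (ha : ¬IsSquare a) :
    nthRootsFinset (Fintype.card F + 1) (1 : K) =
      insert 1 (Finset.univ.image (cayley (F := F) r)) := by
  have hsub : insert 1 (Finset.univ.image (cayley (F := F) r)) ⊆
      nthRootsFinset (Fintype.card F + 1) (1 : K) := by
    simp [Finset.subset_iff, cayley_pow_card_add_one hr ha]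
  refine (Finset.eq_of_subset_of_card_le hsub ?_).symm
  rw [card_insert_one_image_cayley hr ha, ← card_rootsOfUnity_eq_card_nthRootsFinset]
  exact card_rootsOfUnity K _

theorem exists_orderOf_cayley_eq (hr : r ^ 2 = algebraMap F K a) (ha : ¬IsSquare a) {s : ℕ}
    (hs : s ∣ Fintype.card F + 1) (hs1 : s ≠ 1) : ∃ x : F, orderOf (cayley r x) = s := by
  classical
  obtain ⟨ζ, hζ⟩ : ∃ ζ : K, IsPrimitiveRoot ζ (Fintype.card F + 1) := by
    rw [← card_rootsOfUnity_eq_iff_exists_isPrimitiveRoot,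
      card_rootsOfUnity_eq_card_nthRootsFinset, nthRootsFinset_eq_insert_image_cayley hr ha,
      card_insert_one_image_cayley hr ha]
  have hu : orderOf (ζ ^ ((Fintype.card F + 1) / s)) = s := by
    rw [hζ.eq_orderOf] at hs ⊢
    exact orderOf_pow_orderOf_div (hζ.eq_orderOf ▸ Nat.succ_ne_zero _) hs
  have hmem : ζ ^ ((Fintype.card F + 1) / s) ∈ nthRootsFinset (Fintype.card F + 1) (1 : K) := by
    rwa [mem_nthRootsFinset (Nat.succ_pos _), ← orderOf_dvd_iff_pow_eq_one, hu]
  rw [nthRootsFinset_eq_insert_image_cayley hr ha, Finset.mem_insert, Finset.mem_image] at hmem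
  obtain h1 | ⟨x, -, hx⟩ := hmem
  · rw [h1, orderOf_one] at hu
    exact absurd hu.symm hs1
  · exact ⟨x, hx ▸ hu⟩

end Redei

theorem range_minimalPeriod_redeiFun {F : Type*} [Field F] [Fintype F] {a : F} {n : ℕ}
    (ha : ¬IsSquare a) (hn : n.Coprime (Fintype.card F + 1)) :
    Set.range (minimalPeriod (redeiFun a n)) =
      (fun d : ℕ => orderOf (n : ZMod d)) '' {d | d ∣ Fintype.card F + 1 ∧ d ≠ 1} := by
  obtain ⟨r, hr⟩ := IsAlgClosed.exists_pow_nat_eq (algebraMap F (AlgebraicClosure F) a) two_pos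
  ext m
  constructor
  · rintro ⟨x, rfl⟩
    exact ⟨_, ⟨Redei.orderOf_cayley_dvd hr ha x, Redei.orderOf_cayley_ne_one hr ha x⟩,
      (Redei.minimalPeriod_redeiFun hr ha hn x).symm⟩
  · rintro ⟨d, ⟨hd, hd1⟩, rfl⟩
    obtain ⟨x, hx⟩ := Redei.exists_orderOf_cayley_eq hr ha hd hd1
    exact ⟨x, by rw [Redei.minimalPeriod_redeiFun hr ha hn x, hx]⟩

theorem stmt_17_general {F : Type*} [Field F] [Fintype F] (q n j : ℕ) (a : F)
    (hq : Fintype.card F = q) (hns : ¬ IsSquare a)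
    (hcop : Nat.Coprime n (q + 1)) :
    (∀ x : F, Function.minimalPeriod (redeiFun a n) x = j ∨
        Function.minimalPeriod (redeiFun a n) x = 1) ↔
      ∀ s, s ∣ q + 1 → ((n : ZMod s) = 1 ∨ orderOf (n : ZMod s) = j) := by
  subst hq
  have hrange := range_minimalPeriod_redeiFun hns hcop
  rw [Set.ext_iff] at hrange
  constructor
  · intro h s hs
    rcases eq_or_ne s 1 with rfl | hs1
    · exact Or.inl (Subsingleton.elim _ _)
    obtain ⟨x, hx⟩ := (hrange _).mpr ⟨s, ⟨hs, hs1⟩, rfl⟩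
    simp only at hx
    rw [← orderOf_eq_one_iff, ← hx]
    exact (h x).symm
  · intro h x
    obtain ⟨d, ⟨hd, -⟩, hx⟩ := (hrange _).mp ⟨x, rfl⟩
    simp only at hx
    rw [← hx, orderOf_eq_one_iff, or_comm]
    exact h d hd

theorem stmt_17 {F : Type*} [Field F] [Fintype F] (q n j : ℕ) (a : F)
    (hq : Fintype.card F = q) (hodd : Odd q) (ha : a ≠ 0) (hns : ¬ IsSquare a)
    (hn : 0 < n) (hcop : Nat.Coprime n (q + 1)) (hj : 0 < j) :
    (∀ x : F, Function.minimalPeriod (redeiFun a n) x = j ∨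
        Function.minimalPeriod (redeiFun a n) x = 1) ↔
      ∀ s, s ∣ q + 1 → ((n : ZMod s) = 1 ∨ orderOf (n : ZMod s) = j) :=
  stmt_17_general q n j a hq hns hcop
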